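/- Let n ≥ 2, A > 0, α ≥ 0, R > 0, y₀ ∈ ℝⁿ, and let β satisfy n+1 ≤ β < n + α; set b = β/(n+α) ∈ (0,1). Then there exists M > 0 (depending only on A, b, R, α, n and β) such that the function W(x) = −M·(R² − |x − y₀|²)^b satisfies det D²W(x) ≥ A·(R − |x − y₀|)^{β−n−1}·|W(x)|^{−α} at every x ∈ B_R(y₀). -/

import Mathlib

/-- The determinant of the Hessian matrix of `u` at `x`. -/
noncomputable def hessianDet {n : ℕ} (u : EuclideanSpace ℝ (Fin n) → ℝ)
    (x : EuclideanSpace ℝ (Fin n)) : ℝ :=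
  (Matrix.of fun i j : Fin n =>
    iteratedFDeriv ℝ 2 u x ![EuclideanSpace.single i (1 : ℝ), EuclideanSpace.single j (1 : ℝ)]).det

/-!
For a radial function `g (‖y - y₀‖ ^ 2)` the Hessian is `2 g' I + 4 g'' (x - y₀) (x - y₀)ᵀ`,
a rank-one perturbation of a multiple of the identity, whose determinant is
`(2 g')ⁿ⁻¹ (2 g' + 4 g'' ‖x - y₀‖²)`. For `W = -M fᵇ` with `f = R² - ‖x - y₀‖²` this gives
`det D²W = (2 M b)ⁿ f^(n (b - 1) - 1) (R² + (1 - 2 b) ‖x - y₀‖²)`. The last factor is at least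
`(1 - b) R²` and `f ≥ R (R - ‖x - y₀‖)`; since `b (n + α) = β`, the power of `f` splits as
`f^(β - n - 1) · (fᵇ)^(-α)`. So `det D²W ≥ c M^(n + α) (R - ‖x - y₀‖)^(β - n - 1) |W|^(-α)` with
`c` depending only on `n, b, R, β`, and `M` is chosen with `c M^(n + α) = A`.
-/

open Topology

section Radial

variable {F : Type*} [NormedAddCommGroup F] [InnerProductSpace ℝ F]

theorem hasFDerivAt_comp_norm_sub_sq {g : ℝ → ℝ} {g' : ℝ} {y₀ x : F}
    (hg : HasDerivAt g g' (‖x - y₀‖ ^ 2)) :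
    HasFDerivAt (fun y => g (‖y - y₀‖ ^ 2)) ((2 * g') • innerSL ℝ (x - y₀)) x := by
  refine (hg.comp_hasFDerivAt x (hasFDerivAt_sub_const y₀).norm_sq).congr_fderiv ?_
  ext v
  simp only [smul_apply, innerSL_apply_apply, smul_eq_mul,
    ContinuousLinearMap.comp_apply, ContinuousLinearMap.id_apply]
  ring

theorem iteratedFDeriv_two_comp_norm_sub_sq {g g' : ℝ → ℝ} {g'' : ℝ} {y₀ x : F}
    (hg : ∀ᶠ t in 𝓝 (‖x - y₀‖ ^ 2), HasDerivAt g (g' t) t)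
    (hg' : HasDerivAt g' g'' (‖x - y₀‖ ^ 2)) (v w : F) :
    iteratedFDeriv ℝ 2 (fun y => g (‖y - y₀‖ ^ 2)) x ![v, w] =
      2 * g' (‖x - y₀‖ ^ 2) * inner ℝ v w + 4 * g'' * inner ℝ (x - y₀) v * inner ℝ (x - y₀) w := by
  have hgrad : fderiv ℝ (fun y => g (‖y - y₀‖ ^ 2)) =ᶠ[𝓝 x]
      fun y => (2 * g' (‖y - y₀‖ ^ 2)) • innerSL ℝ (y - y₀) := by
    have hq : ContinuousAt (fun y : F => ‖y - y₀‖ ^ 2) x := by fun_prop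
    filter_upwards [hq.eventually hg] with y hy using (hasFDerivAt_comp_norm_sub_sq hy).fderiv
  have hcoeff := (hasFDerivAt_comp_norm_sub_sq hg').const_mul 2
  have hinner : HasFDerivAt (fun y : F => innerSL ℝ (y - y₀)) (innerSL ℝ) x :=
    ((innerSL ℝ).hasFDerivAt.comp x (hasFDerivAt_sub_const y₀)).congr_fderiv
      (ContinuousLinearMap.comp_id _)
  rw [iteratedFDeriv_two_apply, ((hcoeff.smul hinner).congr_of_eventuallyEq hgrad).fderiv]
  simp only [add_apply, smul_apply, ContinuousLinearMap.smulRight_apply, innerSL_apply_apply,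
    smul_eq_mul, Matrix.cons_val_zero, Matrix.cons_val_one]
  rw [innerSL_apply_apply, real_inner_comm v (x - y₀)]
  ring

end Radial

namespace Matrix

theorem det_smul_one_add_vecMulVec {ι R : Type*} [Fintype ι] [DecidableEq ι] [Nonempty ι]
    [Field R] {c : R} (hc : c ≠ 0) (u v : ι → R) :
    (c • (1 : Matrix ι ι R) + vecMulVec u v).det = c ^ (Fintype.card ι - 1) * (c + v ⬝ᵥ u) := by
  have hfactor : c • (1 : Matrix ι ι R) + vecMulVec u v = c • (1 + vecMulVec (c⁻¹ • u) v) := by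
    rw [smul_add, smul_vecMulVec, smul_smul, mul_inv_cancel₀ hc, one_smul]
  rw [hfactor, det_smul, vecMulVec_eq Unit, det_one_add_replicateCol_mul_replicateRow,
    dotProduct_smul, smul_eq_mul, ← pow_sub_one_mul Fintype.card_ne_zero]
  field_simp

end Matrix

theorem hessianDet_comp_norm_sub_sq {n : ℕ} [NeZero n] {g g' : ℝ → ℝ} {g'' : ℝ}
    {y₀ x : EuclideanSpace ℝ (Fin n)}
    (hg : ∀ᶠ t in 𝓝 (‖x - y₀‖ ^ 2), HasDerivAt g (g' t) t)
    (hg' : HasDerivAt g' g'' (‖x - y₀‖ ^ 2)) (hg'0 : g' (‖x - y₀‖ ^ 2) ≠ 0) :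
    hessianDet (fun y => g (‖y - y₀‖ ^ 2)) x =
      (2 * g' (‖x - y₀‖ ^ 2)) ^ (n - 1) * (2 * g' (‖x - y₀‖ ^ 2) + 4 * g'' * ‖x - y₀‖ ^ 2) := by
  have hhess : (Matrix.of fun i j : Fin n => iteratedFDeriv ℝ 2 (fun y => g (‖y - y₀‖ ^ 2)) x
        ![EuclideanSpace.single i 1, EuclideanSpace.single j 1]) =
      (2 * g' (‖x - y₀‖ ^ 2)) • 1 + Matrix.vecMulVec (fun i => 4 * g'' * (x - y₀) i) (x - y₀) := by
    ext i j
    rw [Matrix.of_apply, iteratedFDeriv_two_comp_norm_sub_sq hg hg', Matrix.add_apply,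
      Matrix.smul_apply, Matrix.one_apply, Matrix.vecMulVec_apply]
    simp only [EuclideanSpace.inner_single_right, PiLp.single_apply, conj_trivial, one_mul]
    rcases eq_or_ne i j with rfl | hij
    · simp
    · simp [hij, Ne.symm hij]
  rw [hessianDet, hhess, Matrix.det_smul_one_add_vecMulVec (mul_ne_zero two_ne_zero hg'0),
    Fintype.card_fin, EuclideanSpace.real_norm_sq_eq, Finset.mul_sum]
  simp only [dotProduct]
  congr 2
  exact Finset.sum_congr rfl fun i _ => by ring

theorem hasDerivAt_const_mul_rpow_sub (C a p : ℝ) {t : ℝ} (ht : t < a) :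
    HasDerivAt (fun s => C * (a - s) ^ p) (-(C * p) * (a - t) ^ (p - 1)) t := by
  have h := ((hasDerivAt_id t).const_sub a).rpow_const (p := p) (Or.inl (sub_pos.2 ht).ne')
  exact (h.const_mul C).congr_deriv (by rw [id]; ring)

theorem hessianDet_neg_mul_rpow_radial {n : ℕ} [NeZero n] {M R b : ℝ} (hM : M ≠ 0) (hb : b ≠ 0)
    {y₀ x : EuclideanSpace ℝ (Fin n)} (hx : x ∈ Metric.ball y₀ R) :
    hessianDet (fun y => -M * (R ^ 2 - ‖y - y₀‖ ^ 2) ^ b) x =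
      (2 * M * b) ^ n * (R ^ 2 - ‖x - y₀‖ ^ 2) ^ (n * (b - 1) - 1) *
        (R ^ 2 + (1 - 2 * b) * ‖x - y₀‖ ^ 2) := by
  have hr : ‖x - y₀‖ < R := mem_ball_iff_norm.1 hx
  have hf : 0 < R ^ 2 - ‖x - y₀‖ ^ 2 := by nlinarith [norm_nonneg (x - y₀)]
  have hg : ∀ᶠ t in 𝓝 (‖x - y₀‖ ^ 2),
      HasDerivAt (fun s => -M * (R ^ 2 - s) ^ b) (M * b * (R ^ 2 - t) ^ (b - 1)) t := by
    filter_upwards [eventually_lt_nhds (sub_pos.1 hf)] with t ht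
    simpa using hasDerivAt_const_mul_rpow_sub (-M) (R ^ 2) b ht
  rw [hessianDet_comp_norm_sub_sq hg (hasDerivAt_const_mul_rpow_sub (M * b) (R ^ 2) (b - 1)
    (sub_pos.1 hf)) (by positivity)]
  set f := R ^ 2 - ‖x - y₀‖ ^ 2
  have hexp : f ^ ((n : ℝ) * (b - 1) - 1) = (f ^ (b - 1)) ^ (n - 1) * f ^ (b - 1) * f⁻¹ := by
    rw [← Real.rpow_mul_natCast hf.le, ← Real.rpow_add hf, ← Real.rpow_neg_one, ← Real.rpow_add hf,
      Nat.cast_sub NeZero.one_le]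
    ring_nf
  rw [hexp, Real.rpow_sub_one hf.ne' (b - 1), ← pow_sub_one_mul (NeZero.ne n)]
  field_simp
  ring

theorem sub_rpow_mul_rpow_le_sq_sub_sq {r R e : ℝ} (hr : 0 ≤ r) (hrR : r ≤ R) (he : 0 ≤ e) :
    (R - r) ^ e * R ^ e ≤ (R ^ 2 - r ^ 2) ^ e := by
  rw [show R ^ 2 - r ^ 2 = (R - r) * (R + r) by ring, Real.mul_rpow (by linarith) (by linarith)]
  gcongr <;> linarith

theorem le_hessianDet_neg_mul_rpow_radial {n : ℕ} [NeZero n] {M R α β b : ℝ} (hM : 0 < M)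
    (hb0 : 0 < b) (hb1 : b < 1) (hβ : (n : ℝ) + 1 ≤ β) (hβb : β = b * (n + α))
    {y₀ x : EuclideanSpace ℝ (Fin n)} (hx : x ∈ Metric.ball y₀ R) :
    (2 * b) ^ n * R ^ (β - n - 1) * ((1 - b) * R ^ 2) * M ^ ((n : ℝ) + α) *
        (R - ‖x - y₀‖) ^ (β - n - 1) * |-M * (R ^ 2 - ‖x - y₀‖ ^ 2) ^ b| ^ (-α) ≤
      hessianDet (fun y => -M * (R ^ 2 - ‖y - y₀‖ ^ 2) ^ b) x := by
  have hr : ‖x - y₀‖ < R := mem_ball_iff_norm.1 hx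
  rw [hessianDet_neg_mul_rpow_radial hM.ne' hb0.ne' hx]
  set e := β - n - 1 with he
  set r := ‖x - y₀‖
  set f := R ^ 2 - r ^ 2
  have hf : 0 < f := by nlinarith [norm_nonneg (x - y₀)]
  rw [neg_mul, abs_neg, abs_of_pos (by positivity), Real.mul_rpow hM.le (by positivity),
    ← Real.rpow_mul hf.le, Real.rpow_add hM, Real.rpow_natCast, Real.rpow_neg hM.le]
  calc (2 * b) ^ n * R ^ e * ((1 - b) * R ^ 2) * (M ^ n * M ^ α) * (R - r) ^ e *
        ((M ^ α)⁻¹ * f ^ (b * -α))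
      = (2 * b) ^ n * M ^ n * ((R - r) ^ e * R ^ e) * ((1 - b) * R ^ 2) * f ^ (b * -α) := by
        field_simp
    _ ≤ (2 * b) ^ n * M ^ n * f ^ e * (R ^ 2 + (1 - 2 * b) * r ^ 2) * f ^ (b * -α) := by
        gcongr
        · exact sub_rpow_mul_rpow_le_sq_sub_sq (norm_nonneg _) hr.le (by linarith)
        · nlinarith [norm_nonneg (x - y₀)]
    _ = (2 * M * b) ^ n * f ^ ((n : ℝ) * (b - 1) - 1) * (R ^ 2 + (1 - 2 * b) * r ^ 2) := by
        have hexp : e + b * -α = n * (b - 1) - 1 := by rw [he, hβb]; ring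
        rw [mul_right_comm _ (f ^ e), mul_assoc _ (f ^ e), ← Real.rpow_add hf, hexp]
        ring

theorem exists_subsolution_ball_general
    (n : ℕ) (hn : 2 ≤ n) (A α R β b : ℝ) (hA : 0 < A) (hR : 0 < R)
    (y₀ : EuclideanSpace ℝ (Fin n))
    (hβ : (n : ℝ) + 1 ≤ β) (hβ' : β < n + α) (hb : b = β / ((n : ℝ) + α)) :
    ∃ M : ℝ, 0 < M ∧
      ∀ x ∈ Metric.ball y₀ R,
        A * (R - ‖x - y₀‖) ^ (β - n - 1) * |-M * (R ^ 2 - ‖x - y₀‖ ^ 2) ^ b| ^ (-α)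
          ≤ hessianDet (fun y : EuclideanSpace ℝ (Fin n) =>
              -M * (R ^ 2 - ‖y - y₀‖ ^ 2) ^ b) x := by
  have : NeZero n := ⟨by omega⟩
  have hnα : 0 < (n : ℝ) + α := by linarith
  have hb0 : 0 < b := hb ▸ div_pos (by linarith) hnα
  have hb1 : b < 1 := hb ▸ (div_lt_one hnα).2 hβ'
  have hβb : β = b * (n + α) := by rw [hb]; field_simp
  set K := (2 * b) ^ n * R ^ (β - n - 1) * ((1 - b) * R ^ 2)
  have hK : 0 < K := by
    have : 0 < 1 - b := by linarith
    positivity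
  have hM : 0 < (A / K) ^ ((n : ℝ) + α)⁻¹ := by positivity
  refine ⟨_, hM, fun x hx => ?_⟩
  have h := le_hessianDet_neg_mul_rpow_radial hM hb0 hb1 hβ hβb hx
  rwa [Real.rpow_inv_rpow (by positivity) hnα.ne', mul_div_cancel₀ _ hK.ne'] at h

/-- For `n+1 ≤ β < n+α` and `b = β/(n+α)`, there is `M > 0` such that
`W(x) = -M (R² - |x-y₀|²)^b` satisfies
`det D²W ≥ A (R - |x-y₀|)^{β-n-1} |W|^{-α}` on `B_R(y₀)`. -/
theorem exists_subsolution_ball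
    (n : ℕ) (hn : 2 ≤ n) (A α R β b : ℝ) (hA : 0 < A) (hα : 0 ≤ α) (hR : 0 < R)
    (y₀ : EuclideanSpace ℝ (Fin n))
    (hβ : (n : ℝ) + 1 ≤ β) (hβ' : β < n + α) (hb : b = β / ((n : ℝ) + α)) :
    ∃ M : ℝ, 0 < M ∧
      ∀ x ∈ Metric.ball y₀ R,
        A * (R - ‖x - y₀‖) ^ (β - n - 1) * |-M * (R ^ 2 - ‖x - y₀‖ ^ 2) ^ b| ^ (-α)
          ≤ hessianDet (fun y : EuclideanSpace ℝ (Fin n) =>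
              -M * (R ^ 2 - ‖y - y₀‖ ^ 2) ^ b) x :=
  exists_subsolution_ball_general n hn A α R β b hA hR y₀ hβ hβ' hb
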